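/- arXiv:dg-ga/9605001 — 2 statements merged into one kernel-verified Lean document; each statement's English description precedes it below -/
import Mathlib

section
/- Let Q be a linear map from polynomials in (q,p) to a unital associative ℂ-algebra satisfying Q({f,g}) = (i/ħ)[Q(f),Q(g)], Q(q²)=Q(q)², Q(p²)=Q(p)², and Q(qp)=½(Q(q)Q(p)+Q(p)Q(q)). If additionally every element commuting with both Q(q) and Q(p) is central (or in an irreducible setting, scalar), then Q(q³) = Q(q)³. -/
open MvPolynomial

/-- Canonical Poisson bracket on ℝ[q,p], `q = X 0`, `p = X 1`. -/
noncomputable def pb (f g : MvPolynomial (Fin 2) ℝ) : MvPolynomial (Fin 2) ℝ :=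
  pderiv 0 f * pderiv 1 g - pderiv 1 f * pderiv 0 g

/-! With `μ = i/ħ`, the Dirac condition applied to `{q³,q} = 0` and `{q³,p} = 3q²` gives
`μ[Q(q³),Q(q)] = 0` and `μ[Q(q³),Q(p)] = 3Q(q)²`. Expanding `Q(qp) = ½(Q(q)Q(p) + Q(p)Q(q))` by the
Leibniz rule for commutators then yields `μ[Q(qp),Q(q³)] = -3Q(q)³`, whereas `{qp,q³} = -3q³` says
this commutator is `-3Q(q³)`. -/

theorem pb_X_zero_pow_X_zero (n : ℕ) : pb (X 0 ^ n) (X 0) = 0 := by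
  simp [pb]

theorem pb_X_zero_pow_X_one (n : ℕ) : pb (X 0 ^ n) (X 1) = n • X 0 ^ (n - 1) := by
  simp [pb, nsmul_eq_mul]

theorem pb_X_zero_mul_X_one_X_zero_pow (n : ℕ) : pb (X 0 * X 1) (X 0 ^ n) = -(n • X 0 ^ n) := by
  rcases n with _ | n
  · simp [pb]
  simp [pb, nsmul_eq_mul]
  ring

theorem eq_pow_three_of_smul_commutator {𝕜 A : Type*} [Field 𝕜] [CharZero 𝕜] [Ring A]
    [Algebra 𝕜 A] (c : 𝕜) {q p K : A} (hKq : c • (K * q - q * K) = 0)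
    (hKp : c • (K * p - p * K) = (3 : 𝕜) • q ^ 2)
    (hSK : c • ((1 / 2 : 𝕜) • (q * p + p * q) * K - K * ((1 / 2 : 𝕜) • (q * p + p * q))) =
      (-3 : 𝕜) • K) :
    K = q ^ 3 := by
  have hleibniz : (q * p + p * q) * K - K * (q * p + p * q) =
      -(q * (K * p - p * K) + (K * p - p * K) * q + ((K * q - q * K) * p + p * (K * q - q * K))) := by
    noncomm_ring
  have hsym : c • ((q * p + p * q) * K - K * (q * p + p * q)) = (-6 : 𝕜) • q ^ 3 := by
    rw [hleibniz, smul_neg, smul_add, smul_add, smul_add, ← mul_smul_comm c q,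
      ← smul_mul_assoc c _ q, ← smul_mul_assoc c _ p, ← mul_smul_comm c p, hKp, hKq,
      mul_smul_comm, smul_mul_assoc, ← pow_succ', ← pow_succ, ← add_smul]
    norm_num
  rw [smul_mul_assoc, mul_smul_comm, ← smul_sub, smul_comm, hsym, smul_smul,
    show (1 / 2 : 𝕜) * -6 = -3 by norm_num] at hSK
  exact (smul_right_injective A (by norm_num : (-3 : 𝕜) ≠ 0) hSK).symm

theorem stmt_4_general (hbar : ℝ) (A : Type) [Ring A] [Algebra ℝ A] [Algebra ℂ A]
    (Q : MvPolynomial (Fin 2) ℝ →ₗ[ℝ] A)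
    (hbr : ∀ f g, Q (pb f g) = (Complex.I / (hbar:ℂ)) • (Q f * Q g - Q g * Q f))
    (hq2 : Q ((X 0)^2) = (Q (X 0))^2)
    (hqp : Q (X 0 * X 1) = ((1:ℂ)/2) • (Q (X 0) * Q (X 1) + Q (X 1) * Q (X 0))) :
    Q ((X 0)^3) = (Q (X 0))^3 := by
  apply eq_pow_three_of_smul_commutator (Complex.I / (hbar : ℂ)) (p := Q (X 1))
  · rw [← hbr, pb_X_zero_pow_X_zero, map_zero]
  · rw [← hbr, pb_X_zero_pow_X_one, map_nsmul, Nat.add_one_sub_one, hq2,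
      ofNat_smul_eq_nsmul ℂ 3]
  · rw [← hqp, ← hbr, pb_X_zero_mul_X_one_X_zero_pow, map_neg, map_nsmul, neg_smul,
      ofNat_smul_eq_nsmul ℂ 3]

/-- given the Dirac condition, the quadratic Von Neumann rules, and
that every element commuting with both `Q(q)` and `Q(p)` is central, one has
`Q(q³) = Q(q)³`. -/
theorem stmt_4 (hbar : ℝ) (hhbar : hbar ≠ 0) (A : Type) [Ring A] [Algebra ℝ A] [Algebra ℂ A]
    [IsScalarTower ℝ ℂ A]
    (Q : MvPolynomial (Fin 2) ℝ →ₗ[ℝ] A)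
    (hbr : ∀ f g, Q (pb f g) = (Complex.I / (hbar:ℂ)) • (Q f * Q g - Q g * Q f))
    (hq2 : Q ((X 0)^2) = (Q (X 0))^2)
    (hp2 : Q ((X 1)^2) = (Q (X 1))^2)
    (hqp : Q (X 0 * X 1) = ((1:ℂ)/2) • (Q (X 0) * Q (X 1) + Q (X 1) * Q (X 0)))
    (hcentral : ∀ T : A, T * Q (X 0) = Q (X 0) * T → T * Q (X 1) = Q (X 1) * T →
      ∀ a : A, T * a = a * T) :
    Q ((X 0)^3) = (Q (X 0))^3 :=
  stmt_4_general hbar A Q hbr hq2 hqp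
end

section
/- With the Poisson bracket {f,g} = -Σ ε_{ijk} S_i (∂f/∂S_j)(∂g/∂S_k) on polynomials in (S₁,S₂,S₃), one has, modulo the ideal generated by S₁²+S₂²+S₃² - s², the identity 2s²·S₂S₃ = {S₂², {S₁S₂, S₁S₃}} - (3/4){S₁², {S₁², S₂S₃}}. -/
/-!
Each bracket is an explicit polynomial computation. The combination
`{S₂², {S₁S₂, S₁S₃}} - (3/4){S₁², {S₁², S₂S₃}}` is identically `2S₂S₃` times the Casimir
`S₁² + S₂² + S₃²`, so subtracting `2s²S₂S₃` leaves a multiple of `S₁² + S₂² + S₃² - s²`.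
-/

open MvPolynomial

/-- The spin Poisson bracket `{f,g} = -Σ ε_{ijk} S_i (∂f/∂S_j)(∂g/∂S_k)` on
polynomials in `S₁ = X 0`, `S₂ = X 1`, `S₃ = X 2`. -/
noncomputable def sb (f g : MvPolynomial (Fin 3) ℝ) : MvPolynomial (Fin 3) ℝ :=
  -(X 0 * (pderiv 1 f * pderiv 2 g - pderiv 2 f * pderiv 1 g)
    + X 1 * (pderiv 2 f * pderiv 0 g - pderiv 0 f * pderiv 2 g)
    + X 2 * (pderiv 0 f * pderiv 1 g - pderiv 1 f * pderiv 0 g))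

@[simp]
theorem MvPolynomial.pderiv_ofNat {σ R : Type*} [CommSemiring R] (i : σ) (n : ℕ) [n.AtLeastTwo] :
    pderiv i (ofNat(n) : MvPolynomial σ R) = 0 :=
  (pderiv i).map_natCast n

theorem sb_X0_mul_X1_X0_mul_X2 :
    sb (X 0 * X 1) (X 0 * X 2) = X 0 * (X 1 ^ 2 + X 2 ^ 2 - X 0 ^ 2) := by
  simp only [sb, Derivation.leibniz, pderiv_X, Pi.single_apply, Fin.reduceEq, ↓reduceIte,
    smul_eq_mul]
  ring

theorem sb_X0_sq_X1_mul_X2 :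
    sb (X 0 ^ 2) (X 1 * X 2) = 2 * X 0 * (X 1 ^ 2 - X 2 ^ 2) := by
  simp only [sb, Derivation.leibniz, Derivation.leibniz_pow, pderiv_X, Pi.single_apply,
    Fin.reduceEq, ↓reduceIte, smul_eq_mul, nsmul_eq_mul]
  ring

theorem sb_X0_sq_sb_X0_sq_X1_mul_X2 :
    sb (X 0 ^ 2) (sb (X 0 ^ 2) (X 1 * X 2)) = -16 * X 0 ^ 2 * X 1 * X 2 := by
  rw [sb_X0_sq_X1_mul_X2]
  simp only [sb, Derivation.leibniz, Derivation.leibniz_pow, map_sub, pderiv_X, pderiv_ofNat,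
    Pi.single_apply, Fin.reduceEq, ↓reduceIte, smul_eq_mul, nsmul_eq_mul]
  ring

theorem sb_X1_sq_sb_X0_mul_X1_X0_mul_X2 :
    sb (X 1 ^ 2) (sb (X 0 * X 1) (X 0 * X 2)) =
      2 * X 1 * X 2 * (X 1 ^ 2 + X 2 ^ 2 - 5 * X 0 ^ 2) := by
  rw [sb_X0_mul_X1_X0_mul_X2]
  simp only [sb, Derivation.leibniz, Derivation.leibniz_pow, map_add, map_sub, pderiv_X,
    Pi.single_apply, Fin.reduceEq, ↓reduceIte, smul_eq_mul, nsmul_eq_mul]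
  ring

theorem sb_combination_eq_mul_casimir :
    sb (X 1 ^ 2) (sb (X 0 * X 1) (X 0 * X 2))
        - C (3 / 4 : ℝ) * sb (X 0 ^ 2) (sb (X 0 ^ 2) (X 1 * X 2)) =
      2 * X 1 * X 2 * (X 0 ^ 2 + X 1 ^ 2 + X 2 ^ 2) := by
  have hC : C (3 / 4 : ℝ) * 4 = (3 : MvPolynomial (Fin 3) ℝ) := by
    rw [← map_ofNat C 4, ← map_mul, ← map_ofNat C 3]; norm_num
  rw [sb_X1_sq_sb_X0_mul_X1_X0_mul_X2, sb_X0_sq_sb_X0_sq_X1_mul_X2]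
  linear_combination 4 * X 0 ^ 2 * X 1 * X 2 * hC

theorem stmt_12_general (s : ℝ) :
    sb ((X 1)^2) (sb (X 0 * X 1) (X 0 * X 2))
        - C (3/4 : ℝ) * sb ((X 0)^2) (sb ((X 0)^2) (X 1 * X 2))
        - C (2 * s^2) * (X 1 * X 2)
      ∈ Ideal.span {((X 0)^2 + (X 1)^2 + (X 2)^2 - C (s^2) : MvPolynomial (Fin 3) ℝ)} := by
  rw [Ideal.mem_span_singleton, sb_combination_eq_mul_casimir, map_mul, map_ofNat]
  exact ⟨2 * X 1 * X 2, by ring⟩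

/-- `2s²S₂S₃ = {S₂², {S₁S₂, S₁S₃}} - (3/4){S₁², {S₁², S₂S₃}}`
modulo the ideal generated by `S₁²+S₂²+S₃² - s²`. -/
theorem stmt_12 (s : ℝ) (hs : 0 < s) :
    sb ((X 1)^2) (sb (X 0 * X 1) (X 0 * X 2))
        - C (3/4 : ℝ) * sb ((X 0)^2) (sb ((X 0)^2) (X 1 * X 2))
        - C (2 * s^2) * (X 1 * X 2)
      ∈ Ideal.span {((X 0)^2 + (X 1)^2 + (X 2)^2 - C (s^2) : MvPolynomial (Fin 3) ℝ)} :=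
  stmt_12_general s
end
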